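/- Conditioned Galton–Watson progeny representation: under the law of a Galton–Watson forest with offspring distribution μ, k trees, conditioned to have total size n (assuming this event has positive probability), the sequence of numbers of children of the n individuals listed in a uniformly random order is distributed as n i.i.d. random variables with law μ conditioned on their sum equal to n − k. -/

import Mathlib

open scoped ENNReal

/-- Finite planar rooted trees. -/
inductive PTree : Type
  | node : List PTree → PTree

namespace PTree

/-- Number of vertices of a planar rooted tree. -/
def size : PTree → ℕ
  | node l => 1 + (l.attach.map (fun t => size t.1)).sum
decreasing_by
  have := List.sizeOf_lt_of_mem t.2
  simp only [node.sizeOf_spec] at *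
  omega

/-- Galton–Watson weight of a tree for the offspring law `p`:
the product over all vertices of `p (number of children)`; this is the probability that the
genealogical tree of a single ancestor in a Galton–Watson process with reproduction law `p`
equals the given planar tree. -/
noncomputable def wt (p : PMF ℕ) : PTree → ℝ≥0∞
  | node l => p l.length * (l.attach.map (fun t => wt p t.1)).prod
decreasing_by
  have := List.sizeOf_lt_of_mem t.2
  simp only [node.sizeOf_spec] at *
  omega

/-- Depth-first list of the out-degrees (numbers of children) of the vertices of a tree. -/
def degList : PTree → List ℕ
  | node l => l.length :: (l.attach.map (fun t => degList t.1)).flatten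
decreasing_by
  have := List.sizeOf_lt_of_mem t.2
  simp only [node.sizeOf_spec] at *
  omega

end PTree

/-- Planar forests with `k` rooted trees and `n` vertices in total. -/
def PForest (k n : ℕ) : Type := {f : Fin k → PTree // ∑ i, (f i).size = n}

/-- Galton–Watson weight of a forest of `k` trees: the probability that a Galton–Watson
process with offspring law `p` started from `k` ancestors has this genealogical forest. -/
noncomputable def forestWt (p : PMF ℕ) {k n : ℕ} (f : PForest k n) : ℝ≥0∞ :=
  ∏ i, (f.1 i).wt p

/-- Depth-first list of out-degrees of a forest (trees listed from left to right). -/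
def forestDegList {k n : ℕ} (f : PForest k n) : List ℕ :=
  (List.ofFn fun i => (f.1 i).degList).flatten

open Classical

/-!
The depth-first degree sequence identifies the forests of `k` trees with `n` vertices with the
Łukasiewicz words of length `n`: the sequences `x` with `∑ x = n - k` whose walk
`k + ∑_{i<j} (x i - 1)` stays positive before time `n`; the Galton–Watson weight of a forest is
`∏ p (x i)`. By the cycle lemma, exactly `k` of the `n` cyclic rotations of a sequence with sum
`n - k` are Łukasiewicz words. Averaging over rotations therefore gives both
`n · #{σ | x ∘ σ is a Łukasiewicz word} = n! · k` and Kemperman's formula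
`n · P(size = n) = k · P(S_n = n - k)`, and the theorem is the quotient of the two.
-/

/-- Read left to right, `k` counts the trees still to be explored: a vertex with `m` children
replaces one pending tree by `m`. -/
inductive IsLukasiewicz : ℕ → List ℕ → Prop
  | nil : IsLukasiewicz 0 []
  | cons {k m : ℕ} {w : List ℕ} : IsLukasiewicz (k + m) w → IsLukasiewicz (k + 1) (m :: w)

theorem isLukasiewicz_iff {k : ℕ} {w : List ℕ} :
    IsLukasiewicz k w ↔ w.sum + k = w.length ∧ ∀ j < w.length, j < (w.take j).sum + k := by
  constructor
  · intro h
    induction h with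
    | nil => simp
    | @cons k m w _ ih =>
      refine ⟨by simp; omega, fun j hj => ?_⟩
      cases j with
      | zero => simp
      | succ j =>
        have := ih.2 j (by simpa using hj)
        simp only [List.take_succ_cons, List.sum_cons]
        omega
  · induction w generalizing k with
    | nil =>
      rintro ⟨h, -⟩
      obtain rfl : k = 0 := by simpa using h
      exact .nil
    | cons m w ih =>
      rintro ⟨hsum, hpos⟩
      obtain ⟨k, rfl⟩ : ∃ k', k = k' + 1 := Nat.exists_eq_add_one.2 (by simpa using hpos 0)
      refine .cons (ih ⟨by simp at hsum; omega, fun j hj => ?_⟩)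
      have := hpos (j + 1) (by simpa using hj)
      simp only [List.take_succ_cons, List.sum_cons] at this
      omega

theorem IsLukasiewicz.sum_add_eq_length {k : ℕ} {w : List ℕ} (h : IsLukasiewicz k w) :
    w.sum + k = w.length :=
  (isLukasiewicz_iff.1 h).1

theorem IsLukasiewicz.sum_ofFn_add {k n : ℕ} {y : Fin n → ℕ}
    (h : IsLukasiewicz k (List.ofFn y)) : ∑ i, y i + k = n := by
  simpa [List.sum_ofFn] using h.sum_add_eq_length

namespace PTree

def flatDegList (ts : List PTree) : List ℕ := (ts.map degList).flatten

theorem degList_node (l : List PTree) : degList (node l) = l.length :: flatDegList l := by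
  rw [degList, flatDegList, List.map_attach_eq_pmap]
  simp

theorem size_node (l : List PTree) : size (node l) = 1 + (l.map size).sum := by
  rw [size]; simp

theorem wt_node (p : PMF ℕ) (l : List PTree) :
    wt p (node l) = p l.length * (l.map (wt p)).prod := by
  rw [wt]; simp

@[simp] theorem flatDegList_nil : flatDegList [] = [] := rfl

theorem flatDegList_cons (t : PTree) (ts : List PTree) :
    flatDegList (t :: ts) = degList t ++ flatDegList ts := rfl

theorem flatDegList_append (ts ts' : List PTree) :
    flatDegList (ts ++ ts') = flatDegList ts ++ flatDegList ts' := by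
  simp [flatDegList]

theorem flatDegList_node_cons (l ts : List PTree) :
    flatDegList (node l :: ts) = l.length :: flatDegList (l ++ ts) := by
  rw [flatDegList_cons, degList_node, flatDegList_append, List.cons_append]

theorem flatDegList_eq_nil_iff {ts : List PTree} : flatDegList ts = [] ↔ ts = [] := by
  rcases ts with _ | ⟨⟨l⟩, ts⟩ <;> simp [flatDegList_node_cons]

@[elab_as_elim]
theorem forest_induction {motive : List PTree → Prop} (nil : motive [])
    (node_cons : ∀ l ts, motive (l ++ ts) → motive (node l :: ts)) : ∀ ts, motive ts
  | [] => nil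
  | node l :: ts => node_cons l ts (forest_induction nil node_cons (l ++ ts))
termination_by ts => (flatDegList ts).length
decreasing_by simp [flatDegList_node_cons]

theorem isLukasiewicz_flatDegList (ts : List PTree) :
    IsLukasiewicz ts.length (flatDegList ts) := by
  induction ts using forest_induction with
  | nil => exact .nil
  | node_cons l ts ih =>
    rw [flatDegList_node_cons]
    exact .cons (by simpa [add_comm] using ih)

theorem length_flatDegList (ts : List PTree) :
    (flatDegList ts).length = (ts.map size).sum := by
  induction ts using forest_induction with
  | nil => rfl
  | node_cons l ts ih =>
    simp only [flatDegList_node_cons, List.length_cons, ih, List.map_cons, List.sum_cons,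
      size_node, List.map_append, List.sum_append]
    omega

theorem prod_map_flatDegList (p : PMF ℕ) (ts : List PTree) :
    ((flatDegList ts).map p).prod = (ts.map (wt p)).prod := by
  induction ts using forest_induction with
  | nil => rfl
  | node_cons l ts ih =>
    simp only [flatDegList_node_cons, List.map_cons, List.prod_cons, ih, wt_node,
      List.map_append, List.prod_append, mul_assoc]

theorem flatDegList_injective : Function.Injective flatDegList := by
  suffices ∀ w ts ts', flatDegList ts = w → flatDegList ts' = w → ts = ts' from
    fun ts ts' h => this _ ts ts' h rfl
  intro w
  induction w with
  | nil =>
    intro ts ts' h h'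
    rw [flatDegList_eq_nil_iff.1 h, flatDegList_eq_nil_iff.1 h']
  | cons m w ih =>
    rintro (_ | ⟨⟨l⟩, ts⟩) (_ | ⟨⟨l'⟩, ts'⟩) h h' <;>
      simp only [flatDegList_nil, reduceCtorEq, flatDegList_node_cons, List.cons.injEq] at h h'
    obtain ⟨rfl, rfl⟩ := List.append_inj (ih _ _ h.2 h'.2) (h.1.trans h'.1.symm)
    rfl

end PTree

theorem IsLukasiewicz.exists_flatDegList_eq {k : ℕ} {w : List ℕ} (h : IsLukasiewicz k w) :
    ∃ ts : List PTree, ts.length = k ∧ PTree.flatDegList ts = w := by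
  induction h with
  | nil => exact ⟨[], rfl, rfl⟩
  | @cons k m w _ ih =>
    obtain ⟨ts, hlen, rfl⟩ := ih
    refine ⟨PTree.node (ts.take m) :: ts.drop m, by simp; omega, ?_⟩
    rw [PTree.flatDegList_node_cons, List.take_append_drop, List.length_take,
      min_eq_left (by omega)]

namespace PForest

open Finset PTree

variable {k n : ℕ}

def degSeq (f : PForest k n) (i : Fin n) : ℕ := (forestDegList f).getD i 0

theorem forestDegList_eq (f : PForest k n) :
    forestDegList f = flatDegList (List.ofFn f.1) := by
  rw [forestDegList, flatDegList, List.map_ofFn]; rfl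

theorem length_forestDegList (f : PForest k n) : (forestDegList f).length = n := by
  rw [forestDegList_eq, length_flatDegList, List.map_ofFn, List.sum_ofFn]
  exact f.2

theorem ofFn_degSeq (f : PForest k n) : List.ofFn f.degSeq = forestDegList f :=
  List.ext_getElem (by simp [length_forestDegList]) fun i _ hi => by
    simp [degSeq, List.getElem?_eq_getElem hi]

theorem degSeq_eq_iff {f : PForest k n} {y : Fin n → ℕ} :
    f.degSeq = y ↔ forestDegList f = List.ofFn y := by
  rw [← List.ofFn_inj, ofFn_degSeq]

theorem forestWt_eq_prod_degSeq (p : PMF ℕ) (f : PForest k n) :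
    forestWt p f = ∏ i, p (f.degSeq i) := by
  calc forestWt p f = ((List.ofFn f.1).map (wt p)).prod := by
        rw [List.map_ofFn, List.prod_ofFn]; rfl
    _ = ((forestDegList f).map p).prod := by rw [forestDegList_eq, prod_map_flatDegList]
    _ = ∏ i, p (f.degSeq i) := by rw [← ofFn_degSeq, List.map_ofFn, List.prod_ofFn]; rfl

theorem degSeq_injective : Function.Injective (degSeq : PForest k n → Fin n → ℕ) := by
  intro f f' h
  rw [degSeq_eq_iff, ofFn_degSeq, forestDegList_eq, forestDegList_eq] at h
  exact Subtype.ext (List.ofFn_injective (flatDegList_injective h))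

theorem range_degSeq :
    Set.range (degSeq : PForest k n → Fin n → ℕ) = {y | IsLukasiewicz k (List.ofFn y)} := by
  ext y
  constructor
  · rintro ⟨f, rfl⟩
    rw [Set.mem_ofPred_eq, ofFn_degSeq, forestDegList_eq]
    simpa using isLukasiewicz_flatDegList (List.ofFn f.1)
  · intro hy
    obtain ⟨ts, rfl, hts⟩ := IsLukasiewicz.exists_flatDegList_eq hy
    have hsize : ∑ i, (ts.get i).size = n := by
      simp [← length_flatDegList, hts]
    refine ⟨⟨ts.get, hsize⟩, degSeq_eq_iff.2 ?_⟩
    exact (forestDegList_eq _).trans ((congrArg flatDegList (List.ofFn_get ts)).trans hts)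

theorem tsum_comp_degSeq (g : (Fin n → ℕ) → ℝ≥0∞) :
    ∑' f : PForest k n, g f.degSeq =
      ∑' y, if IsLukasiewicz k (List.ofFn y) then g y else 0 := by
  rw [← tsum_range g degSeq_injective, _root_.tsum_subtype, range_degSeq]
  rfl

theorem tsum_forestWt_eq (p : PMF ℕ) :
    ∑' f : PForest k n, forestWt p f =
      ∑' y : Fin n → ℕ, if IsLukasiewicz k (List.ofFn y) then ∏ i, p (y i) else 0 := by
  simpa only [forestWt_eq_prod_degSeq] using tsum_comp_degSeq fun y => ∏ i, p (y i)

theorem sum_perm_tsum_ite_degSeq (p : PMF ℕ) (x : Fin n → ℕ) :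
    ∑ σ : Equiv.Perm (Fin n), ∑' f : PForest k n,
        (if ∀ i, f.degSeq (σ i) = x i then forestWt p f else 0) =
      #{σ : Equiv.Perm (Fin n) | IsLukasiewicz k (List.ofFn (x ∘ σ))} * ∏ i, p (x i) := by
  have hσ (σ : Equiv.Perm (Fin n)) : ∑' f : PForest k n,
      (if ∀ i, f.degSeq (σ i) = x i then forestWt p f else 0) =
        if IsLukasiewicz k (List.ofFn (x ∘ σ.symm)) then ∏ i, p (x i) else 0 := by
    have hcond (f : PForest k n) : (∀ i, f.degSeq (σ i) = x i) ↔ f.degSeq = x ∘ σ.symm := by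
      rw [Equiv.eq_comp_symm, funext_iff]; rfl
    simp_rw [hcond, forestWt_eq_prod_degSeq]
    rw [tsum_comp_degSeq fun y => if y = x ∘ σ.symm then ∏ i, p (y i) else 0,
      tsum_eq_single (x ∘ σ.symm) fun y hy => by simp [hy]]
    simp [Equiv.prod_comp σ.symm fun i => p (x i)]
  rw [sum_congr rfl fun σ _ => hσ σ, ← Equiv.sum_comp (Equiv.inv _), ← sum_filter, sum_const,
    nsmul_eq_mul]
  rfl

end PForest

section NewMin

open Finset

variable {f : ℕ → ℤ} {i j : ℕ}

def IsNewMin (f : ℕ → ℤ) (j : ℕ) : Prop := ∀ i < j, f j < f i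

def runMin (f : ℕ → ℤ) (j : ℕ) : ℤ := (range (j + 1)).inf' nonempty_range_add_one f

theorem le_runMin_iff {c : ℤ} : c ≤ runMin f j ↔ ∀ i ≤ j, c ≤ f i := by
  simp [runMin, le_inf'_iff]

theorem runMin_le (h : i ≤ j) : runMin f j ≤ f i := le_runMin_iff.1 le_rfl i h

theorem exists_eq_runMin (f : ℕ → ℤ) (j : ℕ) : ∃ i ≤ j, f i = runMin f j := by
  obtain ⟨i, hi, h⟩ := exists_mem_eq_inf' (nonempty_range_add_one (n := j)) f
  exact ⟨i, by simpa [Nat.lt_succ_iff] using hi, h.symm⟩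

theorem runMin_succ : runMin f (j + 1) = min (runMin f j) (f (j + 1)) := by
  refine le_antisymm
    (le_min (le_runMin_iff.2 fun i hi => runMin_le (by omega)) (runMin_le le_rfl))
    (le_runMin_iff.2 fun i hi => ?_)
  rcases Nat.lt_or_eq_of_le hi with hi | rfl
  · exact (min_le_left _ _).trans (runMin_le (by omega))
  · exact min_le_right _ _

theorem isNewMin_succ_iff : IsNewMin f (j + 1) ↔ f (j + 1) < runMin f j := by
  simp [IsNewMin, runMin, lt_inf'_iff]

/-- For a walk that moves down by at most one step at a time, every new minimum is exactly one
below the previous one, so new minima count the levels crossed. -/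
theorem card_isNewMin_Ioc (hf : ∀ j, f j - 1 ≤ f (j + 1)) {a b : ℕ} (hab : a ≤ b) :
    (#{j ∈ Ioc a b | IsNewMin f j} : ℤ) = runMin f a - runMin f b := by
  induction b, hab using Nat.le_induction with
  | base => simp
  | succ b hab ih =>
    have hIoc : Ioc a (b + 1) = insert (b + 1) (Ioc a b) := by ext; simp; omega
    rw [hIoc, filter_insert, runMin_succ]
    have hlow : runMin f b - 1 ≤ f (b + 1) :=
      (sub_le_sub_right (runMin_le le_rfl) 1).trans (hf b)
    by_cases hnew : IsNewMin f (b + 1)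
    · rw [isNewMin_succ_iff] at hnew
      rw [if_pos (isNewMin_succ_iff.2 hnew), card_insert_of_notMem (by simp),
        min_eq_right hnew.le]
      push_cast
      omega
    · rw [isNewMin_succ_iff, not_lt] at hnew
      rw [if_neg (by rwa [isNewMin_succ_iff, not_lt]), min_eq_left hnew, ih]

theorem runMin_add_of_le {n : ℕ} {k : ℤ} (hf : ∀ j, f (j + n) = f j - k) (hk : 0 ≤ k)
    (hj : n ≤ j + 1) : runMin f (j + n) = runMin f j - k := by
  refine le_antisymm ?_ (le_runMin_iff.2 fun i hi => ?_)
  · obtain ⟨i, hi, hfi⟩ := exists_eq_runMin f j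
    exact (runMin_le (i := i + n) (by omega)).trans_eq (by rw [hf, hfi])
  · rcases Nat.lt_or_ge i n with hin | hin
    · linarith [runMin_le (f := f) (show i ≤ j by omega)]
    · obtain ⟨i, rfl⟩ := Nat.exists_eq_add_of_le' hin
      rw [hf]
      linarith [runMin_le (f := f) (show i ≤ j by omega)]

end NewMin

section LukasiewiczWalk

open Finset

variable {d : ℕ → ℕ} {k n : ℕ}

def lukasiewiczWalk (d : ℕ → ℕ) (j : ℕ) : ℤ := ∑ i ∈ range j, ((d i : ℤ) - 1)

@[simp] theorem lukasiewiczWalk_zero (d : ℕ → ℕ) : lukasiewiczWalk d 0 = 0 := rfl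

theorem lukasiewiczWalk_add_sub (d : ℕ → ℕ) (c j : ℕ) :
    lukasiewiczWalk d (c + j) - lukasiewiczWalk d c =
      ((∑ i ∈ range j, d (c + i) : ℕ) : ℤ) - j := by
  simp [lukasiewiczWalk, sum_range_add, sum_sub_distrib]
  ring

theorem lukasiewiczWalk_sub_one_le (d : ℕ → ℕ) (j : ℕ) :
    lukasiewiczWalk d j - 1 ≤ lukasiewiczWalk d (j + 1) := by
  simp only [lukasiewiczWalk, sum_range_succ]
  linarith [(d j).cast_nonneg (α := ℤ)]

theorem lukasiewiczWalk_add_period (hd : ∀ i, d (i + n) = d i)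
    (hsum : ∑ i ∈ range n, d i + k = n) (j : ℕ) :
    lukasiewiczWalk d (j + n) = lukasiewiczWalk d j - k := by
  have hshift := lukasiewiczWalk_add_sub d n j
  have hj := lukasiewiczWalk_add_sub d 0 j
  have hn := lukasiewiczWalk_add_sub d 0 n
  simp only [zero_add, add_comm n, hd, lukasiewiczWalk_zero] at hshift hj hn
  omega

theorem sum_take_ofFn (g : ℕ → ℕ) {j : ℕ} (hj : j ≤ n) :
    ((List.ofFn fun i : Fin n => g i).take j).sum = ∑ i ∈ range j, g i := by
  induction j with
  | zero => simp
  | succ j ih =>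
    rw [List.sum_take_succ _ _ (by simpa using hj), ih (by omega), sum_range_succ]
    simp

theorem isLukasiewicz_window_iff (d : ℕ → ℕ) (c : ℕ) :
    IsLukasiewicz k (List.ofFn fun i : Fin n => d (c + i)) ↔
      lukasiewiczWalk d (c + n) + k = lukasiewiczWalk d c ∧
        ∀ j < n, lukasiewiczWalk d (c + n) < lukasiewiczWalk d (c + j) := by
  rw [isLukasiewicz_iff, List.length_ofFn, List.sum_ofFn,
    Fin.sum_univ_eq_sum_range (fun i => d (c + i))]
  have hwalk := lukasiewiczWalk_add_sub d c
  have hend : ∑ i ∈ range n, d (c + i) + k = n ↔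
      lukasiewiczWalk d (c + n) + k = lukasiewiczWalk d c := by
    specialize hwalk n
    omega
  rw [hend]
  refine and_congr_right fun hend => forall₂_congr fun j hj => ?_
  rw [sum_take_ofFn (fun i => d (c + i)) hj.le]
  specialize hwalk j
  omega

/-- A window of a sequence whose walk drifts by `-k` per period is a Łukasiewicz word exactly
when its end is a new minimum of the whole walk: earlier times `i < c` are `k` higher than their
translates `i + n`, which lie inside the window. -/
theorem isLukasiewicz_window_iff_isNewMin
    (hper : ∀ j, lukasiewiczWalk d (j + n) = lukasiewiczWalk d j - k) {c : ℕ} (hc : c ≤ n) :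
    IsLukasiewicz k (List.ofFn fun i : Fin n => d (c + i)) ↔
      IsNewMin (lukasiewiczWalk d) (c + n) := by
  rw [isLukasiewicz_window_iff]
  constructor
  · rintro ⟨-, hwin⟩ i hi
    rcases Nat.lt_or_ge i c with hic | hci
    · have := hwin (i + n - c) (by omega)
      rw [show c + (i + n - c) = i + n by omega, hper i] at this
      omega
    · simpa [show c + (i - c) = i by omega] using hwin (i - c) (by omega)
  · intro h
    exact ⟨by rw [hper c]; ring, fun j hj => h (c + j) (by omega)⟩

theorem card_rotations_isLukasiewicz [NeZero n] (y : Fin n → ℕ) (hy : ∑ i, y i + k = n) :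
    #{c : Fin n | IsLukasiewicz k (List.ofFn fun i => y (i + c))} = k := by
  set d : ℕ → ℕ := fun i => y (Fin.ofNat n i)
  have hd : ∀ i, d (i + n) = d i := fun i => by simp [d, Fin.ofNat, Nat.add_mod_right]
  have hsum : ∑ i ∈ range n, d i + k = n := by
    rw [← Fin.sum_univ_eq_sum_range]; simpa [d, Fin.ofNat_val_eq_self] using hy
  have hper := lukasiewiczWalk_add_period hd hsum
  have hrot (c : Fin n) : (fun i : Fin n => y (i + c)) = fun i : Fin n => d (c + i) := by
    funext i; exact congrArg y (Fin.ext (by simp [Fin.val_add, add_comm]))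
  have hgood (c : Fin n) :
      IsLukasiewicz k (List.ofFn fun i => y (i + c)) ↔ IsNewMin (lukasiewiczWalk d) (c + n) :=
    hrot c ▸ isLukasiewicz_window_iff_isNewMin hper c.is_lt.le
  obtain ⟨m, rfl⟩ := Nat.exists_eq_add_one_of_ne_zero (NeZero.ne n)
  have hcount :=
    card_isNewMin_Ioc (lukasiewiczWalk_sub_one_le d) (le_add_right le_rfl : m ≤ m + (m + 1))
  rw [runMin_add_of_le hper (by positivity) le_rfl, sub_sub_cancel] at hcount
  calc #{c : Fin (m + 1) | IsLukasiewicz k (List.ofFn fun i => y (i + c))}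
      = #{j ∈ Ioc m (m + (m + 1)) | IsNewMin (lukasiewiczWalk d) j} := by
        refine card_nbij' (fun c => c + (m + 1)) (fun j => Fin.ofNat (m + 1) (j - (m + 1)))
          ?_ ?_ ?_ ?_ <;> intro a ha <;>
          simp only [coe_filter, mem_univ, true_and, Set.mem_ofPred_eq, mem_Ioc, hgood] at ha ⊢
        · exact ⟨⟨by omega, by omega⟩, ha⟩
        · rw [Fin.val_ofNat, Nat.mod_eq_of_lt (by omega), Nat.sub_add_cancel (by omega)]
          exact ha.2
        · exact Fin.ext (by simp)
        · rw [Fin.val_ofNat, Nat.mod_eq_of_lt (by omega)]; omega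
    _ = k := by exact_mod_cast hcount

end LukasiewiczWalk

section Counting

open Finset
open scoped Nat

variable {k n : ℕ} [NeZero n]

theorem card_perm_isLukasiewicz_mul (x : Fin n → ℕ) (hx : ∑ i, x i + k = n) :
    #{σ : Equiv.Perm (Fin n) | IsLukasiewicz k (List.ofFn (x ∘ σ))} * n = n ! * k := by
  have hrow (σ : Equiv.Perm (Fin n)) :
      #{c : Fin n | IsLukasiewicz k (List.ofFn fun i => (x ∘ σ) (i + c))} = k :=
    card_rotations_isLukasiewicz _ (by rwa [Function.comp_def, Equiv.sum_comp σ x])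
  have hcol (c : Fin n) :
      #{σ : Equiv.Perm (Fin n) | IsLukasiewicz k (List.ofFn fun i => (x ∘ σ) (i + c))} =
        #{σ : Equiv.Perm (Fin n) | IsLukasiewicz k (List.ofFn (x ∘ σ))} := by
    simp only [card_filter]
    exact Equiv.sum_comp (Equiv.mulRight (Equiv.addRight c))
      fun σ => if IsLukasiewicz k (List.ofFn (x ∘ σ)) then 1 else 0
  calc #{σ : Equiv.Perm (Fin n) | IsLukasiewicz k (List.ofFn (x ∘ σ))} * n
      = ∑ c : Fin n,
          #{σ : Equiv.Perm (Fin n) | IsLukasiewicz k (List.ofFn fun i => (x ∘ σ) (i + c))} := by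
        rw [sum_congr rfl fun c _ => hcol c, sum_const, card_univ, Fintype.card_fin, smul_eq_mul,
          mul_comm]
    _ = ∑ σ : Equiv.Perm (Fin n),
          #{c : Fin n | IsLukasiewicz k (List.ofFn fun i => (x ∘ σ) (i + c))} := by
        simp only [card_filter]; exact sum_comm
    _ = n ! * k := by
        rw [sum_congr rfl fun σ _ => hrow σ, sum_const, card_univ, Fintype.card_perm,
          Fintype.card_fin, smul_eq_mul]

theorem natCast_mul_tsum_isLukasiewicz (q : ℕ → ℝ≥0∞) :
    n * ∑' y : Fin n → ℕ, (if IsLukasiewicz k (List.ofFn y) then ∏ i, q (y i) else 0) =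
      k * ∑' y : Fin n → ℕ, if ∑ i, y i + k = n then ∏ i, q (y i) else 0 := by
  set F : (Fin n → ℕ) → ℝ≥0∞ :=
    fun y => if IsLukasiewicz k (List.ofFn y) then ∏ i, q (y i) else 0
  have hrot (c : Fin n) : ∑' y, F y = ∑' y : Fin n → ℕ, F fun i => y (i + c) :=
    (Equiv.tsum_eq ((Equiv.addRight c).symm.arrowCongr (Equiv.refl ℕ)) F).symm
  have hpt (y : Fin n → ℕ) :
      ∑ c : Fin n, F (fun i => y (i + c)) = k * if ∑ i, y i + k = n then ∏ i, q (y i) else 0 := by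
    have hprod (c : Fin n) : ∏ i, q (y (i + c)) = ∏ i, q (y i) :=
      Equiv.prod_comp (Equiv.addRight c) fun i => q (y i)
    have hsum (c : Fin n) : ∑ i, y (i + c) = ∑ i, y i := Equiv.sum_comp (Equiv.addRight c) y
    simp only [F, hprod, ← sum_filter, sum_const, nsmul_eq_mul]
    split_ifs with hy
    · rw [card_rotations_isLukasiewicz y hy]
    · rw [filter_false_of_mem fun c _ hc => hy ?_]
      · simp
      · simpa [hsum] using hc.sum_ofFn_add
  calc (n : ℝ≥0∞) * ∑' y, F y = ∑ c : Fin n, ∑' y : Fin n → ℕ, F fun i => y (i + c) := by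
        rw [sum_congr rfl fun c _ => (hrot c).symm, sum_const, card_univ, Fintype.card_fin,
          nsmul_eq_mul]
    _ = ∑' y : Fin n → ℕ, ∑ c : Fin n, F fun i => y (i + c) :=
        (Summable.tsum_finsetSum fun _ _ => ENNReal.summable).symm
    _ = _ := by simp only [hpt, ENNReal.tsum_mul_left]

theorem card_perm_isLukasiewicz_mul_tsum (q : ℕ → ℝ≥0∞) (x : Fin n → ℕ)
    (hx : ∑ i, x i + k = n) :
    #{σ : Equiv.Perm (Fin n) | IsLukasiewicz k (List.ofFn (x ∘ σ))} *
        ∑' y : Fin n → ℕ, (if ∑ i, y i + k = n then ∏ i, q (y i) else 0) =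
      n ! * ∑' y : Fin n → ℕ, if IsLukasiewicz k (List.ofFn y) then ∏ i, q (y i) else 0 := by
  have hcard : ((#{σ : Equiv.Perm (Fin n) | IsLukasiewicz k (List.ofFn (x ∘ σ))} : ℕ) : ℝ≥0∞) *
      n = n ! * k := by
    exact_mod_cast card_perm_isLukasiewicz_mul x hx
  refine (ENNReal.mul_right_inj (by simp [NeZero.ne n]) (ENNReal.natCast_ne_top n)).1 ?_
  rw [← mul_assoc, mul_comm (n : ℝ≥0∞), hcard, mul_assoc, ← natCast_mul_tsum_isLukasiewicz]
  ring

end Counting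

/-- Both conditional laws are written in unnormalised form: for a candidate degree sequence `x`,
`(∑_σ P(forest of size n with permuted degree sequence x)) · P(S n = n - k)`
`= n! · Z · (∏ i, p (x i)) · 1_{∑ x = n - k}`. -/
theorem conditioned_gw_children_exchangeable_general
    (p : PMF ℕ) (k n : ℕ) (hk : 1 ≤ k) (hkn : k ≤ n)
    (Z : ℝ≥0∞) (hZ : Z = ∑' f : PForest k n, forestWt p f)
    (W : ℝ≥0∞) (hW : W = ∑' x : {x : Fin n → ℕ // ∑ i, x i = n - k}, ∏ i, p (x.1 i))
    (x : Fin n → ℕ) :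
    (∑ σ : Equiv.Perm (Fin n), ∑' f : PForest k n,
        (if ∀ i : Fin n, (forestDegList f).getD (σ i) 0 = x i then forestWt p f else 0)) * W
      = (n.factorial : ℝ≥0∞) * Z *
        (if ∑ i, x i = n - k then ∏ i, p (x i) else 0) := by
  have : NeZero n := ⟨by omega⟩
  have hW' : W = ∑' y : Fin n → ℕ, if ∑ i, y i + k = n then ∏ i, p (y i) else 0 := by
    rw [hW]
    refine (tsum_subtype {y : Fin n → ℕ | ∑ i, y i = n - k} fun y => ∏ i, p (y i)).trans
      (tsum_congr fun y => ?_)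
    simp only [Set.indicator, Set.mem_ofPred_eq]
    exact if_congr (by omega) rfl rfl
  change (∑ σ : Equiv.Perm (Fin n), ∑' f : PForest k n,
    (if ∀ i, f.degSeq (σ i) = x i then forestWt p f else 0)) * W = _
  rw [PForest.sum_perm_tsum_ite_degSeq]
  split_ifs with hx
  · rw [hW', hZ, PForest.tsum_forestWt_eq, mul_right_comm,
      card_perm_isLukasiewicz_mul_tsum _ x (by omega)]
  · have hnone (σ : Equiv.Perm (Fin n)) : ¬IsLukasiewicz k (List.ofFn (x ∘ σ)) := fun hσ => by
      have := hσ.sum_ofFn_add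
      rw [Function.comp_def, Equiv.sum_comp σ x] at this
      omega
    simp [hnone]

/-- Under the law of a Galton–Watson forest with offspring law `p`, `k` trees,
conditioned to have total size `n` (an event of positive probability `Z`), the sequence of the
numbers of children of the `n` individuals listed in uniformly random order is distributed as
`n` i.i.d. variables of law `p` conditioned to have sum `n - k`.  Both conditional laws are
written here in unnormalized form: for every candidate degree sequence `x : Fin n → ℕ`,
`(∑_σ P(forest of size n with permuted degree sequence x)) · P(S n = n - k)`
`= n! · Z · (∏ i, p (x i)) · 1_{∑ x = n - k}`. -/
theorem conditioned_gw_children_exchangeable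
    (p : PMF ℕ) (k n : ℕ) (hk : 1 ≤ k) (hkn : k ≤ n)
    (Z : ℝ≥0∞) (hZ : Z = ∑' f : PForest k n, forestWt p f) (hZpos : 0 < Z)
    (W : ℝ≥0∞) (hW : W = ∑' x : {x : Fin n → ℕ // ∑ i, x i = n - k}, ∏ i, p (x.1 i))
    (x : Fin n → ℕ) :
    (∑ σ : Equiv.Perm (Fin n), ∑' f : PForest k n,
        (if ∀ i : Fin n, (forestDegList f).getD (σ i) 0 = x i then forestWt p f else 0)) * W
      = (n.factorial : ℝ≥0∞) * Z *
        (if ∑ i, x i = n - k then ∏ i, p (x i) else 0) :=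
  conditioned_gw_children_exchangeable_general p k n hk hkn Z hZ W hW x
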